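/- arXiv:0810.0732 — 3 statements merged into one kernel-verified Lean document; each statement's English description precedes it below -/
import Mathlib

section
/- There is an absolute constant c > 0 such that for every positive integer d and every δ ∈ (0, 1/10), there exists r ≤ (1/2)√d such that the region S(r) = {x ∈ [0, 1/2]^d : r − δ ≤ ‖x‖₂ ≤ r} has Lebesgue volume at least c·δ·2^{−d}. -/
/-!
If `x` is uniform on `[0, 1/2]^d`, then `‖x‖₂² = ∑ xᵢ²` is a sum of `d` i.i.d. variables with
mean `1/12` and variance `1/180`, so by Chebyshev half of the cube lies where
`|‖x‖₂² - d/12| < √(d/90)`. There `‖x‖₂` lies in a shell of width `2` just below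
`b = √(d/12 + √(d/90)) ≤ √d/2`. Cutting this shell into `⌊2/δ⌋ + 1` shells of width `δ`,
one of them carries at least the fraction `δ/(2 + δ)` of its volume.
-/

open MeasureTheory Real ProbabilityTheory

theorem MeasureTheory.Measure.pi_cond {ι : Type*} [Fintype ι] {α : ι → Type*}
    [∀ i, MeasurableSpace (α i)] (μ : ∀ i, Measure (α i)) [∀ i, SigmaFinite (μ i)]
    {s : ∀ i, Set (α i)} (hs : ∀ i, MeasurableSet (s i)) (hfin : ∀ i, μ i (s i) ≠ ⊤) :
    Measure.pi (fun i => (μ i)[|s i]) = (Measure.pi μ)[|Set.univ.pi s] := by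
  refine Measure.pi_eq fun t ht => ?_
  rw [cond_apply (MeasurableSet.univ_pi hs), ← Set.pi_inter_distrib, Measure.pi_pi,
    Measure.pi_pi, ENNReal.prod_inv_distrib fun i _ j _ _ => Or.inr (hfin j),
    ← Finset.prod_mul_distrib]
  exact Finset.prod_congr rfl fun i _ => (cond_apply (hs i) _ _).symm

theorem ProbabilityTheory.meas_ge_le_card_mul_variance_div_sq {ι Ω : Type*} [Fintype ι]
    [MeasurableSpace Ω] (ν : Measure Ω) [IsProbabilityMeasure ν] {g : Ω → ℝ}
    (hg : MemLp g 2 ν) {c : ℝ} (hc : 0 < c) :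
    Measure.pi (fun _ : ι => ν) {x | c ≤ |∑ i, g (x i) - Fintype.card ι * ∫ t, g t ∂ν|} ≤
      ENNReal.ofReal (Fintype.card ι * Var[g; ν] / c ^ 2) := by
  have hgi : ∀ i : ι, MemLp (fun x : ι → Ω => g (x i)) 2 (Measure.pi fun _ => ν) :=
    fun i => hg.comp_measurePreserving (measurePreserving_eval _ i)
  have hmean : ∫ x, ∑ i, g (x i) ∂(Measure.pi fun _ : ι => ν) = Fintype.card ι * ν[g] := by
    rw [integral_finsetSum _ fun i _ => (hgi i).integrable one_le_two]
    simp [integral_comp_eval (μ := fun _ : ι => ν) hg.aestronglyMeasurable]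
  have hvar : Var[fun x => ∑ i, g (x i); Measure.pi fun _ : ι => ν] =
      Fintype.card ι * Var[g; ν] := by
    simpa [Finset.sum_fn] using
      variance_sum_pi (μ := fun _ : ι => ν) (X := fun _ => g) fun _ => hg
  have := meas_ge_le_variance_div_sq (memLp_finsetSum Finset.univ fun i _ => hgi i) hc
  rwa [hmean, hvar] at this

theorem isProbabilityMeasure_cond_Icc {a b : ℝ} (hab : a < b) :
    IsProbabilityMeasure (volume[|Set.Icc a b]) :=
  cond_isProbabilityMeasure_of_finite (by simpa using hab) (by simp)

theorem integral_pow_cond_Icc_zero {a : ℝ} (ha : 0 < a) (n : ℕ) :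
    ∫ t, t ^ n ∂volume[|Set.Icc 0 a] = a ^ n / (n + 1) := by
  rw [ProbabilityTheory.cond, integral_smul_measure, integral_Icc_eq_integral_Ioc,
    ← intervalIntegral.integral_of_le ha.le, integral_pow, Real.volume_Icc]
  simp only [sub_zero, ENNReal.toReal_inv, ENNReal.toReal_ofReal ha.le, smul_eq_mul]
  field_simp
  ring

theorem memLp_pow_cond_Icc (a : ℝ) (n : ℕ) (p : ENNReal) :
    MemLp (fun t : ℝ => t ^ n) p (volume[|Set.Icc 0 a]) := by
  refine MemLp.of_bound (by fun_prop) (|a| ^ n) ?_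
  filter_upwards [ae_cond_mem measurableSet_Icc] with t ht
  rw [Real.norm_eq_abs, abs_pow]
  exact pow_le_pow_left₀ (abs_nonneg t) (abs_le_abs_of_nonneg ht.1 ht.2) n

theorem variance_sq_cond_Icc_zero {a : ℝ} (ha : 0 < a) :
    Var[fun t : ℝ => t ^ 2; volume[|Set.Icc 0 a]] = 4 * a ^ 4 / 45 := by
  have := isProbabilityMeasure_cond_Icc ha
  rw [variance_eq_sub (memLp_pow_cond_Icc a 2 2)]
  simp only [Pi.pow_apply, ← pow_mul]
  rw [integral_pow_cond_Icc_zero ha, integral_pow_cond_Icc_zero ha]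
  push_cast
  ring

theorem ofReal_half_le_pi_cond_Icc_abs_sum_sq_sub_lt {ι : Type*} [Fintype ι] [Nonempty ι]
    {a : ℝ} (ha : 0 < a) :
    ENNReal.ofReal (1 / 2) ≤ Measure.pi (fun _ : ι => volume[|Set.Icc 0 a])
      {x | |∑ i, x i ^ 2 - Fintype.card ι * a ^ 2 / 3| < a ^ 2 * √(8 * Fintype.card ι / 45)} := by
  have := isProbabilityMeasure_cond_Icc ha
  have hn : (0 : ℝ) < Fintype.card ι := by exact_mod_cast Fintype.card_pos
  set c := a ^ 2 * √(8 * Fintype.card ι / 45)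
  set B := {x : ι → ℝ | c ≤ |∑ i, x i ^ 2 - Fintype.card ι * a ^ 2 / 3|}
  have hB : MeasurableSet B := measurableSet_le measurable_const (by fun_prop)
  have hdev : Measure.pi (fun _ : ι => volume[|Set.Icc 0 a]) B ≤ ENNReal.ofReal (1 / 2) := by
    have := meas_ge_le_card_mul_variance_div_sq (ι := ι) (volume[|Set.Icc 0 a])
      (memLp_pow_cond_Icc a 2 2) (c := c) (by positivity)
    -- `c ^ 2` is twice the variance of `∑ i, x i ^ 2`
    have hc : Fintype.card ι * (4 * a ^ 4 / 45) / c ^ 2 = 1 / 2 := by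
      rw [mul_pow, Real.sq_sqrt (by positivity)]
      field_simp
      ring
    rw [integral_pow_cond_Icc_zero ha, variance_sq_cond_Icc_zero ha, hc] at this
    convert this using 6
    push_cast
    ring
  calc ENNReal.ofReal (1 / 2) = 1 - ENNReal.ofReal (1 / 2) := by
        rw [← ENNReal.ofReal_one, ← ENNReal.ofReal_sub _ (by norm_num)]; norm_num
    _ ≤ Measure.pi (fun _ : ι => volume[|Set.Icc 0 a]) Bᶜ := by
        rw [prob_compl_eq_one_sub hB]; gcongr
    _ = _ := by congr 1; ext x; simp [B, not_le]

theorem ofReal_pow_div_two_le_volume_abs_sum_sq_sub_lt {ι : Type*} [Fintype ι] [Nonempty ι]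
    {a : ℝ} (ha : 0 < a) :
    ENNReal.ofReal (a ^ Fintype.card ι / 2) ≤
      volume {x : ι → ℝ | (∀ i, x i ∈ Set.Icc 0 a) ∧
        |∑ i, x i ^ 2 - Fintype.card ι * a ^ 2 / 3| < a ^ 2 * √(8 * Fintype.card ι / 45)} := by
  set cube : Set (ι → ℝ) := Set.univ.pi fun _ => Set.Icc 0 a
  have hcube : MeasurableSet cube := MeasurableSet.univ_pi fun _ => measurableSet_Icc
  have hvol : volume cube = ENNReal.ofReal (a ^ Fintype.card ι) := by
    rw [volume_pi_pi]
    simp [Real.volume_Icc, ENNReal.ofReal_pow ha.le]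
  have hP : Measure.pi (fun _ : ι => volume[|Set.Icc 0 a]) = volume[|cube] :=
    Measure.pi_cond _ (fun _ => measurableSet_Icc) (fun _ => by simp)
  calc ENNReal.ofReal (a ^ Fintype.card ι / 2)
      = ENNReal.ofReal (1 / 2) * volume cube := by
        rw [hvol, ← ENNReal.ofReal_mul (by norm_num)]; ring_nf
    _ ≤ volume[{x | |∑ i, x i ^ 2 - Fintype.card ι * a ^ 2 / 3| <
          a ^ 2 * √(8 * Fintype.card ι / 45)} | cube] * volume cube := by
        rw [← hP]; gcongr; exact ofReal_half_le_pi_cond_Icc_abs_sum_sq_sub_lt ha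
    _ = _ := by
        rw [cond_mul_eq_inter' hcube (hvol ▸ ENNReal.ofReal_ne_top)]
        congr 1
        ext x
        simp only [cube, Set.mem_inter_iff, Set.mem_univ_pi, Set.mem_ofPred_eq]

theorem sqrt_mem_Icc_of_abs_sub_lt {S m u w : ℝ} (hS₀ : 0 ≤ S)
    (hu : 2 * u ≤ w * √(m + u)) (hS : |S - m| < u) :
    √S ∈ Set.Icc (√(m + u) - w) (√(m + u)) := by
  obtain ⟨hlo, hhi⟩ := abs_lt.mp hS
  refine ⟨?_, Real.sqrt_le_sqrt (by linarith)⟩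
  -- `√(m + u) - √S = (m + u - S) / (√(m + u) + √S) < 2 * u / √(m + u) ≤ w`
  by_contra! hlt
  have hb := Real.sq_sqrt (show 0 ≤ m + u by linarith)
  have hs := Real.sq_sqrt hS₀
  have h0 := Real.sqrt_nonneg S
  have hsq : S < (√(m + u) - w) ^ 2 := by nlinarith
  have hw : w * (√(m + u) - w) < 0 := by nlinarith
  have hwb : w * √(m + u) ≤ 0 :=
    mul_nonpos_of_nonpos_of_nonneg (by nlinarith) (Real.sqrt_nonneg _)
  linarith [abs_nonneg (S - m)]

theorem exists_thin_shell_measure_ge {α : Type*} [MeasurableSpace α] (μ : Measure α)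
    (s : Set α) (f : α → ℝ) {b L δ : ℝ} (hL : 0 ≤ L) (hδ : 0 < δ) :
    ∃ r ≤ b, ENNReal.ofReal (δ / (L + δ)) * μ {x | x ∈ s ∧ b - L ≤ f x ∧ f x ≤ b} ≤
      μ {x | x ∈ s ∧ r - δ ≤ f x ∧ f x ≤ r} := by
  set N := ⌊L / δ⌋₊ + 1
  set T : ℕ → Set α := fun k => {x | x ∈ s ∧ b - k * δ - δ ≤ f x ∧ f x ≤ b - k * δ}
  obtain ⟨k, -, hmax⟩ := (Finset.range N).exists_max_image (fun k => μ (T k))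
    Finset.nonempty_range_add_one
  refine ⟨b - k * δ, by linarith [mul_nonneg k.cast_nonneg hδ.le], ?_⟩
  have hcover : {x | x ∈ s ∧ b - L ≤ f x ∧ f x ≤ b} ⊆ ⋃ j ∈ Finset.range N, T j := by
    rintro x ⟨hx, hlo, hhi⟩
    set j := ⌊(b - f x) / δ⌋₊
    have hj : (j : ℝ) * δ ≤ b - f x := by
      rw [← le_div_iff₀ hδ]; exact Nat.floor_le (div_nonneg (by linarith) hδ.le)
    have hj' : b - f x < (j + 1) * δ := by
      rw [← div_lt_iff₀ hδ]; exact Nat.lt_floor_add_one _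
    have hjN : j < N := Nat.lt_succ_of_le (Nat.floor_le_floor (by gcongr; linarith))
    exact Set.mem_biUnion (Finset.mem_range.mpr hjN) ⟨hx, by linarith, by linarith⟩
  have hN : δ / (L + δ) * N ≤ 1 := by
    have : (⌊L / δ⌋₊ : ℝ) ≤ L / δ := Nat.floor_le (div_nonneg hL hδ.le)
    rw [div_mul_eq_mul_div, div_le_one (by linarith)]
    simp only [N, Nat.cast_add, Nat.cast_one]
    calc δ * (⌊L / δ⌋₊ + 1) ≤ δ * (L / δ + 1) := by gcongr
      _ = L + δ := by field_simp
  calc ENNReal.ofReal (δ / (L + δ)) * μ {x | x ∈ s ∧ b - L ≤ f x ∧ f x ≤ b}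
      ≤ ENNReal.ofReal (δ / (L + δ)) * ∑ j ∈ Finset.range N, μ (T j) := by
        gcongr; exact (measure_mono hcover).trans (measure_biUnion_finset_le _ _)
    _ ≤ ENNReal.ofReal (δ / (L + δ)) * (N * μ (T k)) := by
        gcongr
        simpa using Finset.sum_le_card_nsmul _ _ _ hmax
    _ = ENNReal.ofReal (δ / (L + δ) * N) * μ (T k) := by
        rw [ENNReal.ofReal_mul (by positivity), ENNReal.ofReal_natCast, mul_assoc]
    _ ≤ μ (T k) := mul_le_of_le_one_left zero_le (ENNReal.ofReal_le_one.mpr hN)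

theorem exists_volume_cube_shell_ge (d : ℕ) (hd : 1 ≤ d) :
    ∃ b ≤ √d / 2, ENNReal.ofReal ((1 / 2) ^ d / 2) ≤
      volume {x : Fin d → ℝ | (∀ i, x i ∈ Set.Icc (0 : ℝ) (1 / 2)) ∧
        b - 2 ≤ √(∑ i, x i ^ 2) ∧ √(∑ i, x i ^ 2) ≤ b} := by
  have : Nonempty (Fin d) := ⟨⟨0, hd⟩⟩
  have bulk := ofReal_pow_div_two_le_volume_abs_sum_sq_sub_lt (ι := Fin d) (a := 1 / 2)
    (by norm_num)
  simp only [Fintype.card_fin] at bulk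
  set m : ℝ := d * (1 / 2) ^ 2 / 3
  set u : ℝ := (1 / 2) ^ 2 * √(8 * d / 45)
  have hu : u ^ 2 = d / 90 := by
    rw [mul_pow, Real.sq_sqrt (by positivity)]; ring
  have hu₀ : 0 ≤ u := by positivity
  have hm : m = d / 12 := by ring
  have hd' : (1 : ℝ) ≤ d := by exact_mod_cast hd
  have hwidth : 2 * u ≤ 2 * √(m + u) := by
    rw [mul_le_mul_iff_of_pos_left two_pos]
    exact Real.le_sqrt_of_sq_le (by linarith)
  refine ⟨√(m + u), ?_, bulk.trans (measure_mono fun x ⟨hcube, hx⟩ => ⟨hcube, ?_⟩)⟩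
  · rw [Real.sqrt_le_left (by positivity), div_pow, Real.sq_sqrt (by positivity)]
    nlinarith
  · exact sqrt_mem_Icc_of_abs_sub_lt (by positivity) hwidth hx

theorem stmt_6 :
    ∃ c > (0 : ℝ), ∀ d : ℕ, 1 ≤ d → ∀ δ : ℝ, δ ∈ Set.Ioo (0 : ℝ) (1 / 10) →
      ∃ r ≤ Real.sqrt d / 2,
        volume {x : Fin d → ℝ | (∀ i, x i ∈ Set.Icc (0 : ℝ) (1 / 2)) ∧
          r - δ ≤ Real.sqrt (∑ i, x i ^ 2) ∧ Real.sqrt (∑ i, x i ^ 2) ≤ r} ≥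
        ENNReal.ofReal (c * δ * (1 / 2) ^ d) := by
  refine ⟨1 / 6, by norm_num, fun d hd δ ⟨hδ₀, hδ₁⟩ => ?_⟩
  obtain ⟨b, hb, hbulk⟩ := exists_volume_cube_shell_ge d hd
  obtain ⟨r, hr, hshell⟩ := exists_thin_shell_measure_ge volume
    {x : Fin d → ℝ | ∀ i, x i ∈ Set.Icc (0 : ℝ) (1 / 2)} (fun x => √(∑ i, x i ^ 2))
    (b := b) zero_le_two hδ₀
  have hfrac : 1 / 6 * δ * (1 / 2) ^ d ≤ δ / (2 + δ) * ((1 / 2) ^ d / 2) := by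
    have : δ / 3 ≤ δ / (2 + δ) := by gcongr; linarith
    have : (0 : ℝ) < (1 / 2) ^ d := by positivity
    nlinarith
  refine ⟨r, hr.trans hb, le_trans ?_ hshell⟩
  calc ENNReal.ofReal (1 / 6 * δ * (1 / 2) ^ d)
      ≤ ENNReal.ofReal (δ / (2 + δ)) * ENNReal.ofReal ((1 / 2) ^ d / 2) := by
        rw [← ENNReal.ofReal_mul (by positivity)]
        exact ENNReal.ofReal_le_ofReal hfrac
    _ ≤ _ := by gcongr; exact hbulk
end

section
/- Let S = {x ∈ [0,1/2]^d : r − δ ≤ ‖x‖₂ ≤ r} for some 0 < δ < r. If x − y, x, and x + y all lie in S, then ‖y‖₂ ≤ √(2δr). -/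
theorem stmt_7 (d : ℕ) (r δ : ℝ) (hδ : 0 < δ) (hδr : δ < r)
    (x y : EuclideanSpace ℝ (Fin d))
    (S : Set (EuclideanSpace ℝ (Fin d)))
    (hS : S = {z : EuclideanSpace ℝ (Fin d) |
      (∀ i, z i ∈ Set.Icc (0 : ℝ) (1 / 2)) ∧ r - δ ≤ ‖z‖ ∧ ‖z‖ ≤ r})
    (h1 : x - y ∈ S) (h2 : x ∈ S) (h3 : x + y ∈ S) :
    ‖y‖ ≤ Real.sqrt (2 * δ * r) := by
  subst hS
  obtain ⟨-, h1a, h1b⟩ := h1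
  obtain ⟨-, h2a, h2b⟩ := h2
  obtain ⟨-, h3a, h3b⟩ := h3
  have hpar := norm_add_sq_real x y
  have hpar2 := norm_sub_sq_real x y
  have h0 : (0:ℝ) ≤ ‖x - y‖ := norm_nonneg _
  have h0' : (0:ℝ) ≤ ‖x + y‖ := norm_nonneg _
  rw [← Real.sqrt_sq (norm_nonneg y)]
  apply Real.sqrt_le_sqrt
  nlinarith [mul_le_mul h3b h3b h0' (le_of_lt (lt_trans hδ hδr)),
    mul_le_mul h1b h1b h0 (le_of_lt (lt_trans hδ hδr)),
    mul_le_mul h2a h2a (by linarith) (norm_nonneg x)]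
end

section
/- Let d ≥ 1, N an even positive integer, S ⊆ 𝕋^d measurable, and B ⊆ 𝕋^d × 𝕋^d measurable such that whenever x − y, x, x + y ∈ S one has (x, y) ∈ B. For θ, α ∈ 𝕋^d let T(A_{θ,α}) denote the number of nontrivial 3-term arithmetic progressions in A_{θ,α} = {n ∈ {1,…,N} : θn + α ∈ S}. Then the expectation of T(A_{θ,α}) over uniform independent θ, α is at most N² · vol(B) / 2. -/
/-!
Every progression `(n - m, n, n + m)` in `A_{θ,α}` with `1 ≤ m < n ≤ N` forces
`(nθ + α, mθ) ∈ B`. For fixed `(n, m)` with `m ≠ 0` the shear `(θ, α) ↦ (nθ + α, mθ)` preserves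
Haar measure on `𝕋^d × 𝕋^d` (translating `α` by `nθ` preserves Haar measure, and `θ ↦ mθ` is a
surjective endomorphism of a compact group), so each of the at most `N² / 2` pairs `m < n`
contributes at most `vol(B)` to the expectation.
-/

open MeasureTheory Finset
open scoped Classical

lemma natCast_card_filter_apply_mem {ι α β : Type*} {f : ι → α → β} {B : Set β}
    (U : Finset ι) (x : α) :
    (#{i ∈ U | f i x ∈ B} : ℝ) = ∑ i ∈ U, (f i ⁻¹' B).indicator 1 x := by
  rw [natCast_card_filter]
  rfl

section CardFilter

variable {ι α β : Type*} [MeasurableSpace α] [MeasurableSpace β] {μ : Measure α}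
  {ν : Measure β} [IsFiniteMeasure μ] {f : ι → α → β} {B : Set β}

lemma integrable_card_filter_apply_mem (U : Finset ι) (hf : ∀ i ∈ U, Measurable (f i))
    (hB : MeasurableSet B) : Integrable (fun x => (#{i ∈ U | f i x ∈ B} : ℝ)) μ := by
  simp_rw [natCast_card_filter_apply_mem]
  exact integrable_finsetSum U fun i hi => (integrable_const 1).indicator (hf i hi hB)

lemma integral_card_filter_apply_mem (U : Finset ι)
    (hf : ∀ i ∈ U, MeasurePreserving (f i) μ ν) (hB : MeasurableSet B) :
    ∫ x, (#{i ∈ U | f i x ∈ B} : ℝ) ∂μ = #U * ν.real B := by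
  simp_rw [natCast_card_filter_apply_mem]
  rw [integral_finsetSum U fun i hi =>
    (integrable_const 1).indicator ((hf i hi).measurable hB)]
  calc ∑ i ∈ U, ∫ x, (f i ⁻¹' B).indicator 1 x ∂μ = ∑ _i ∈ U, ν.real B := by
        refine sum_congr rfl fun i hi => ?_
        rw [integral_indicator_one ((hf i hi).measurable hB), measureReal_def, measureReal_def,
          (hf i hi).measure_preimage hB.nullMeasurableSet]
    _ = #U * ν.real B := by rw [sum_const, nsmul_eq_mul]

end CardFilter

theorem measurePreserving_shear {G : Type*} [AddCommGroup G] [TopologicalSpace G]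
    [IsTopologicalAddGroup G] [MeasurableSpace G] [BorelSpace G] [CompactSpace G]
    [SecondCountableTopology G] [DivisibleBy G ℤ] (μ : Measure G) [μ.IsAddHaarMeasure]
    (n : ℕ) {m : ℕ} (hm : m ≠ 0) :
    MeasurePreserving (fun p : G × G => (n • p.1 + p.2, m • p.1)) (μ.prod μ) (μ.prod μ) := by
  have hsmul : MeasurePreserving (fun x : G => m • x) μ μ := by
    simpa only [natCast_zsmul] using Measure.measurePreserving_zsmul μ (n := m) (by omega)
  have hskew : MeasurePreserving (fun p : G × G => (p.1, n • p.1 + p.2)) (μ.prod μ) (μ.prod μ) :=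
    (MeasurePreserving.id μ).skew_product (by measurability) <|
      Filter.Eventually.of_forall fun x => (measurePreserving_add_left μ (n • x)).map_eq
  exact Measure.measurePreserving_swap.comp ((hsmul.prod (MeasurePreserving.id μ)).comp hskew)

lemma two_mul_card_filter_lt_le {γ : Type*} [LinearOrder γ] (s : Finset γ) :
    2 * #{q ∈ s ×ˢ s | q.2 < q.1} ≤ #s ^ 2 := by
  have hswap : #{q ∈ s ×ˢ s | q.2 < q.1} ≤ #{q ∈ s ×ˢ s | ¬ q.2 < q.1} :=
    card_le_card_of_injOn Prod.swap
      (fun q hq => by simp only [coe_filter, Set.mem_ofPred_eq, mem_product] at hq ⊢; grind)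
      Prod.swap_injective.injOn
  have htotal := card_filter_add_card_filter_not (s := s ×ˢ s) (fun q => q.2 < q.1)
  rw [card_product] at htotal
  nlinarith

section Progressions

variable {G : Type*} [AddCommGroup G]

/-- The set `A_{θ,α}`. -/
noncomputable def visitSet (S : Set G) (N : ℕ) (θ α : G) : Finset ℕ :=
  {n ∈ Icc 1 N | n • θ + α ∈ S}

/-- The pair `(n, m)` stands for the progression `(n - m, n, n + m)`; since `n - m` is truncated
subtraction, `n - m ∈ A ⊆ [1, N]` already forces `m < n`. -/
noncomputable def threeAPPairs (A : Finset ℕ) (N : ℕ) : Finset (ℕ × ℕ) :=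
  {q ∈ Icc 1 N ×ˢ Icc 1 N | q.1 - q.2 ∈ A ∧ q.1 ∈ A ∧ q.1 + q.2 ∈ A}

lemma card_threeAPPairs_visitSet_le {S : Set G} {B : Set (G × G)}
    (hSB : ∀ x y : G, x - y ∈ S → x ∈ S → x + y ∈ S → (x, y) ∈ B) (N : ℕ) (θ α : G) :
    #(threeAPPairs (visitSet S N θ α) N) ≤
      #{q ∈ {q ∈ Icc 1 N ×ˢ Icc 1 N | q.2 < q.1} | (q.1 • θ + α, q.2 • θ) ∈ B} := by
  refine card_le_card fun q hq => ?_
  obtain ⟨hq, hsub, hmid, hadd⟩ := mem_filter.mp hq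
  simp only [visitSet, mem_filter, mem_Icc] at hsub hmid hadd
  have hlt : q.2 < q.1 := by omega
  have hsub' : q.1 • θ + α - q.2 • θ = (q.1 - q.2) • θ + α := by
    rw [sub_nsmul θ hlt.le]
    abel
  have hadd' : q.1 • θ + α + q.2 • θ = (q.1 + q.2) • θ + α := by
    rw [add_nsmul]
    abel
  refine mem_filter.mpr ⟨mem_filter.mpr ⟨hq, hlt⟩, hSB _ _ ?_ hmid.2 ?_⟩
  · rw [hsub']
    exact hsub.2
  · rw [hadd']
    exact hadd.2

end Progressions

theorem stmt_12_general (d : ℕ) (N : ℕ)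
    (S : Set (Fin d → AddCircle (1 : ℝ)))
    (B : Set ((Fin d → AddCircle (1 : ℝ)) × (Fin d → AddCircle (1 : ℝ))))
    (hB : MeasurableSet B)
    (hSB : ∀ x y : Fin d → AddCircle (1 : ℝ),
      x - y ∈ S → x ∈ S → x + y ∈ S → (x, y) ∈ B) :
    (∫ p : (Fin d → AddCircle (1 : ℝ)) × (Fin d → AddCircle (1 : ℝ)),
      ((((Finset.Icc 1 N) ×ˢ (Finset.Icc 1 N)).filter
        (fun q : ℕ × ℕ =>
          q.1 - q.2 ∈ (Finset.Icc 1 N).filter (fun n => (fun i => n • p.1 i + p.2 i) ∈ S) ∧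
          q.1 ∈ (Finset.Icc 1 N).filter (fun n => (fun i => n • p.1 i + p.2 i) ∈ S) ∧
          q.1 + q.2 ∈ (Finset.Icc 1 N).filter (fun n => (fun i => n • p.1 i + p.2 i) ∈ S))).card : ℝ))
    ≤ (N : ℝ) ^ 2 * (volume B).toReal / 2 := by
  set U : Finset (ℕ × ℕ) := {q ∈ Icc 1 N ×ˢ Icc 1 N | q.2 < q.1}
  let shear (q : ℕ × ℕ) (p : (Fin d → AddCircle (1 : ℝ)) × (Fin d → AddCircle (1 : ℝ))) :=
    (q.1 • p.1 + p.2, q.2 • p.1)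
  have hshear : ∀ q ∈ U, MeasurePreserving (shear q) volume volume := fun q hq => by
    simp only [U, mem_filter, mem_product, mem_Icc] at hq
    exact measurePreserving_shear volume q.1 (by omega)
  have hU : 2 * #U ≤ N ^ 2 := by simpa using two_mul_card_filter_lt_le (Icc 1 N)
  change ∫ p : (Fin d → AddCircle (1 : ℝ)) × (Fin d → AddCircle (1 : ℝ)),
    (#(threeAPPairs (visitSet S N p.1 p.2) N) : ℝ) ≤ _
  calc _ ≤ ∫ p, (#{q ∈ U | shear q p ∈ B} : ℝ) :=
        integral_mono_of_nonneg (ae_of_all _ fun _ => by positivity)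
          (integrable_card_filter_apply_mem U (fun q hq => (hshear q hq).measurable) hB)
          (ae_of_all _ fun p => Nat.cast_le.mpr (card_threeAPPairs_visitSet_le hSB N p.1 p.2))
    _ = #U * volume.real B := integral_card_filter_apply_mem U hshear hB
    _ ≤ (N : ℝ) ^ 2 * (volume B).toReal / 2 := by
        have hU' : 2 * (#U : ℝ) ≤ (N : ℝ) ^ 2 := by exact_mod_cast hU
        rw [measureReal_def]
        nlinarith [ENNReal.toReal_nonneg (a := volume B)]

theorem stmt_12 (d : ℕ) (hd : 1 ≤ d) (N : ℕ) (hN : 0 < N) (hNeven : Even N)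
    (S : Set (Fin d → AddCircle (1 : ℝ))) (hS : MeasurableSet S)
    (B : Set ((Fin d → AddCircle (1 : ℝ)) × (Fin d → AddCircle (1 : ℝ))))
    (hB : MeasurableSet B)
    (hSB : ∀ x y : Fin d → AddCircle (1 : ℝ),
      x - y ∈ S → x ∈ S → x + y ∈ S → (x, y) ∈ B) :
    (∫ p : (Fin d → AddCircle (1 : ℝ)) × (Fin d → AddCircle (1 : ℝ)),
      ((((Finset.Icc 1 N) ×ˢ (Finset.Icc 1 N)).filter
        (fun q : ℕ × ℕ =>
          q.1 - q.2 ∈ (Finset.Icc 1 N).filter (fun n => (fun i => n • p.1 i + p.2 i) ∈ S) ∧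
          q.1 ∈ (Finset.Icc 1 N).filter (fun n => (fun i => n • p.1 i + p.2 i) ∈ S) ∧
          q.1 + q.2 ∈ (Finset.Icc 1 N).filter (fun n => (fun i => n • p.1 i + p.2 i) ∈ S))).card : ℝ))
    ≤ (N : ℝ) ^ 2 * (volume B).toReal / 2 :=
  stmt_12_general d N S B hB hSB
end
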